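/- arXiv:1901.08731 — 4 statements merged into one kernel-verified Lean document; each statement's English description precedes it below -/
import Mathlib

section
/- Complementary slackness implies optimality: if y is primal-feasible, v is dual-feasible, and additionally y_{tsa} > 0 implies that the corresponding dual constraint holds with equality (v_{Ts} = c_{Tsa} for t = T, and v_{ts} = c_{tsa} + ∑_{s'} P_{sas'} v_{t+1,s'} for t < T), then ∑_{t,s} p_{ts} v_{ts} = ∑_{t,s,a} c_{tsa} y_{tsa}, and hence y is optimal for the primal and v is optimal for the dual. -/
open Finset

/-- Primal feasibility: nonnegative flow satisfying the Kolmogorov equations. -/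
def PrimalFeasible (T S A : ℕ) (hT : 0 < T)
    (p : Fin T → Fin S → ℝ) (P : Fin S → Fin A → Fin S → ℝ)
    (y : Fin T → Fin S → Fin A → ℝ) : Prop :=
  (∀ t s a, 0 ≤ y t s a) ∧
  (∀ s, ∑ a, y ⟨0, hT⟩ s a = p ⟨0, hT⟩ s) ∧
  (∀ (t : ℕ) (ht : t + 1 < T) (s : Fin S),
    ∑ a, y ⟨t + 1, ht⟩ s a
      = p ⟨t + 1, ht⟩ s
        + ∑ s', ∑ a, P s' a s * y ⟨t, lt_trans (Nat.lt_succ_self t) ht⟩ s' a)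

/-- Dual feasibility: Bellman inequalities. -/
def DualFeasible (T S A : ℕ) (hT : 0 < T)
    (c : Fin T → Fin S → Fin A → ℝ) (P : Fin S → Fin A → Fin S → ℝ)
    (v : Fin T → Fin S → ℝ) : Prop :=
  (∀ (s : Fin S) (a : Fin A),
    v ⟨T - 1, Nat.sub_lt hT one_pos⟩ s ≤ c ⟨T - 1, Nat.sub_lt hT one_pos⟩ s a) ∧
  (∀ (t : ℕ) (ht : t + 1 < T) (s : Fin S) (a : Fin A),
    v ⟨t, lt_trans (Nat.lt_succ_self t) ht⟩ s
      ≤ c ⟨t, lt_trans (Nat.lt_succ_self t) ht⟩ s a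
        + ∑ s', P s a s' * v ⟨t + 1, ht⟩ s')

lemma key_identity (T S A : ℕ) (hT : 0 < T)
    (p : Fin T → Fin S → ℝ) (P : Fin S → Fin A → Fin S → ℝ)
    (y : Fin T → Fin S → Fin A → ℝ)
    (v : Fin T → Fin S → ℝ)
    (hy : PrimalFeasible T S A hT p P y) :
    ∑ t, ∑ s, p t s * v t s
      = ∑ t : Fin T, ∑ s, ∑ a, y t s a *
          (if h : (t : ℕ) + 1 < T then
            v t s - ∑ s', P s a s' * v ⟨(t : ℕ) + 1, h⟩ s'
          else v t s) := by
  classical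
  obtain ⟨hy0, hy1, hy2⟩ := hy
  set Af : ℕ → ℝ := fun t => if h : t < T then ∑ s, p ⟨t, h⟩ s * v ⟨t, h⟩ s else 0 with hAf
  set Ff : ℕ → ℝ := fun t => if h : t < T then ∑ s, ∑ a, y ⟨t, h⟩ s a * v ⟨t, h⟩ s else 0 with hFf
  set Gf : ℕ → ℝ := fun t => if h : t + 1 < T then
      ∑ s, ∑ a, y ⟨t, lt_trans (Nat.lt_succ_self t) h⟩ s a * ∑ s', P s a s' * v ⟨t + 1, h⟩ s'
    else 0 with hGf
  have claim : ∀ n : ℕ, n + 1 ≤ T →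
      ∑ t ∈ Finset.range (n + 1), Af t
        = ∑ t ∈ Finset.range (n + 1), Ff t - ∑ t ∈ Finset.range n, Gf t := by
    intro n
    induction n with
    | zero =>
      intro h1
      simp only [zero_add, Finset.sum_range_one, Finset.sum_range_zero, sub_zero, hAf, hFf]
      rw [dif_pos hT, dif_pos hT]
      refine Finset.sum_congr rfl fun s _ => ?_
      rw [← hy1 s, Finset.sum_mul]
    | succ m ih =>
      intro h2
      have hm1 : m + 1 < T := h2
      rw [Finset.sum_range_succ Af (m + 1), Finset.sum_range_succ Ff (m + 1),
        Finset.sum_range_succ Gf m, ih (le_of_lt hm1)]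
      have hstep : Af (m + 1) = Ff (m + 1) - Gf m := by
        simp only [hAf, hFf, hGf]
        rw [dif_pos hm1, dif_pos hm1, dif_pos hm1]
        have expand : ∀ s : Fin S,
            p ⟨m + 1, hm1⟩ s * v ⟨m + 1, hm1⟩ s
              = (∑ a, y ⟨m + 1, hm1⟩ s a) * v ⟨m + 1, hm1⟩ s
                - (∑ s', ∑ a, P s' a s * y ⟨m, lt_trans (Nat.lt_succ_self m) hm1⟩ s' a)
                    * v ⟨m + 1, hm1⟩ s := by
          intro s
          rw [hy2 m hm1 s]
          ring
        rw [Finset.sum_congr rfl fun s _ => expand s, Finset.sum_sub_distrib]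
        congr 1
        · exact Finset.sum_congr rfl fun s _ => by rw [Finset.sum_mul]
        · -- swap sums
          simp_rw [Finset.sum_mul, Finset.mul_sum]
          rw [Finset.sum_comm]
          refine Finset.sum_congr rfl fun s' _ => ?_
          rw [Finset.sum_comm]
          refine Finset.sum_congr rfl fun a _ => Finset.sum_congr rfl fun s _ => ?_
          ring
      rw [hstep]
      try ring
  have hTsplit : T - 1 + 1 = T := Nat.succ_pred_eq_of_pos hT
  have lhs_eq : ∑ t, ∑ s, p t s * v t s = ∑ t ∈ Finset.range T, Af t := by
    rw [← Fin.sum_univ_eq_sum_range]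
    refine Finset.sum_congr rfl fun t _ => ?_
    simp only [hAf]
    rw [dif_pos t.isLt]
  have rhs_eq : (∑ t : Fin T, ∑ s, ∑ a, y t s a *
          (if h : (t : ℕ) + 1 < T then
            v t s - ∑ s', P s a s' * v ⟨(t : ℕ) + 1, h⟩ s'
          else v t s))
      = ∑ t ∈ Finset.range T, Ff t - ∑ t ∈ Finset.range T, Gf t := by
    rw [← Finset.sum_sub_distrib, ← Fin.sum_univ_eq_sum_range (fun t => Ff t - Gf t)]
    refine Finset.sum_congr rfl fun t _ => ?_
    simp only [hFf, hGf]
    rw [dif_pos t.isLt]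
    by_cases h : (t : ℕ) + 1 < T
    · rw [dif_pos h]
      simp only [dif_pos h, Fin.eta]
      rw [← Finset.sum_sub_distrib]
      refine Finset.sum_congr rfl fun s _ => ?_
      rw [← Finset.sum_sub_distrib]
      refine Finset.sum_congr rfl fun a _ => ?_
      ring
    · rw [dif_neg h, sub_zero]
      simp only [dif_neg h, Fin.eta]
  rw [lhs_eq, rhs_eq]
  have : ∑ t ∈ Finset.range T, Gf t = ∑ t ∈ Finset.range (T - 1), Gf t := by
    conv_lhs => rw [← hTsplit]
    rw [Finset.sum_range_succ]
    have : Gf (T - 1) = 0 := by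
      simp only [hGf]
      rw [dif_neg (by omega)]
    rw [this, add_zero]
  rw [this]
  have := claim (T - 1) (by omega)
  rw [hTsplit] at this
  exact this

lemma weak_duality (T S A : ℕ) (hT : 0 < T)
    (c : Fin T → Fin S → Fin A → ℝ)
    (p : Fin T → Fin S → ℝ) (P : Fin S → Fin A → Fin S → ℝ)
    (y : Fin T → Fin S → Fin A → ℝ)
    (hy : PrimalFeasible T S A hT p P y)
    (v : Fin T → Fin S → ℝ)
    (hv : DualFeasible T S A hT c P v) :
    ∑ t, ∑ s, p t s * v t s ≤ ∑ t, ∑ s, ∑ a, c t s a * y t s a := by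
  rw [key_identity T S A hT p P y v hy]
  refine Finset.sum_le_sum fun t _ => Finset.sum_le_sum fun s _ =>
    Finset.sum_le_sum fun a _ => ?_
  by_cases h : (t : ℕ) + 1 < T
  · rw [dif_pos h]
    have h1 : v t s - ∑ s', P s a s' * v ⟨(t : ℕ) + 1, h⟩ s' ≤ c t s a := by
      have h2 := hv.2 (t : ℕ) h s a
      simp only [Fin.eta] at h2
      linarith
    calc y t s a * (v t s - ∑ s', P s a s' * v ⟨(t : ℕ) + 1, h⟩ s')
        ≤ y t s a * c t s a := mul_le_mul_of_nonneg_left h1 (hy.1 t s a)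
      _ = c t s a * y t s a := mul_comm _ _
  · rw [dif_neg h]
    have ht : t = ⟨T - 1, Nat.sub_lt hT one_pos⟩ := by
      apply Fin.ext
      have := t.isLt
      simp only []
      omega
    have hvc : v t s ≤ c t s a := by rw [ht]; exact hv.1 s a
    calc y t s a * v t s ≤ y t s a * c t s a :=
        mul_le_mul_of_nonneg_left hvc (hy.1 t s a)
      _ = c t s a * y t s a := mul_comm _ _

lemma cs_equality (T S A : ℕ) (hT : 0 < T)
    (c : Fin T → Fin S → Fin A → ℝ)
    (p : Fin T → Fin S → ℝ) (P : Fin S → Fin A → Fin S → ℝ)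
    (y : Fin T → Fin S → Fin A → ℝ)
    (hy : PrimalFeasible T S A hT p P y)
    (v : Fin T → Fin S → ℝ)
    (hv : DualFeasible T S A hT c P v)
    (hcsT : ∀ (s : Fin S) (a : Fin A),
      0 < y ⟨T - 1, Nat.sub_lt hT one_pos⟩ s a →
        v ⟨T - 1, Nat.sub_lt hT one_pos⟩ s = c ⟨T - 1, Nat.sub_lt hT one_pos⟩ s a)
    (hcs : ∀ (t : ℕ) (ht : t + 1 < T) (s : Fin S) (a : Fin A),
      0 < y ⟨t, lt_trans (Nat.lt_succ_self t) ht⟩ s a →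
        v ⟨t, lt_trans (Nat.lt_succ_self t) ht⟩ s
          = c ⟨t, lt_trans (Nat.lt_succ_self t) ht⟩ s a
            + ∑ s', P s a s' * v ⟨t + 1, ht⟩ s') :
    ∑ t, ∑ s, p t s * v t s = ∑ t, ∑ s, ∑ a, c t s a * y t s a := by
  rw [key_identity T S A hT p P y v hy]
  refine Finset.sum_congr rfl fun t _ => Finset.sum_congr rfl fun s _ =>
    Finset.sum_congr rfl fun a _ => ?_
  rcases eq_or_lt_of_le (hy.1 t s a) with h0 | h0
  · rw [← h0, zero_mul, mul_zero]
  · by_cases h : (t : ℕ) + 1 < T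
    · rw [dif_pos h]
      have h2 := hcs (t : ℕ) h s a (by simpa [Fin.eta] using h0)
      simp only [Fin.eta] at h2
      rw [h2]
      ring
    · rw [dif_neg h]
      have ht : t = ⟨T - 1, Nat.sub_lt hT one_pos⟩ := by
        apply Fin.ext
        have := t.isLt
        simp only []
        omega
      have h2 : v t s = c t s a := by
        rw [ht]; exact hcsT s a (by rw [← ht]; exact h0)
      rw [h2]
      ring

theorem complementary_slackness_optimality
    (T S A : ℕ) (hT : 0 < T) (hS : 0 < S) (hA : 0 < A)
    (c : Fin T → Fin S → Fin A → ℝ)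
    (p : Fin T → Fin S → ℝ) (hp : ∀ t s, 0 ≤ p t s)
    (P : Fin S → Fin A → Fin S → ℝ)
    (hP : ∀ s a s', 0 ≤ P s a s')
    (hP1 : ∀ s a, ∑ s', P s a s' = 1)
    (y : Fin T → Fin S → Fin A → ℝ)
    (hy : PrimalFeasible T S A hT p P y)
    (v : Fin T → Fin S → ℝ)
    (hv : DualFeasible T S A hT c P v)
    (hcsT : ∀ (s : Fin S) (a : Fin A),
      0 < y ⟨T - 1, Nat.sub_lt hT one_pos⟩ s a →
        v ⟨T - 1, Nat.sub_lt hT one_pos⟩ s = c ⟨T - 1, Nat.sub_lt hT one_pos⟩ s a)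
    (hcs : ∀ (t : ℕ) (ht : t + 1 < T) (s : Fin S) (a : Fin A),
      0 < y ⟨t, lt_trans (Nat.lt_succ_self t) ht⟩ s a →
        v ⟨t, lt_trans (Nat.lt_succ_self t) ht⟩ s
          = c ⟨t, lt_trans (Nat.lt_succ_self t) ht⟩ s a
            + ∑ s', P s a s' * v ⟨t + 1, ht⟩ s') :
    (∑ t, ∑ s, p t s * v t s = ∑ t, ∑ s, ∑ a, c t s a * y t s a) ∧
    (∀ y', PrimalFeasible T S A hT p P y' →
      ∑ t, ∑ s, ∑ a, c t s a * y t s a ≤ ∑ t, ∑ s, ∑ a, c t s a * y' t s a) ∧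
    (∀ v', DualFeasible T S A hT c P v' →
      ∑ t, ∑ s, p t s * v' t s ≤ ∑ t, ∑ s, p t s * v t s) := by
  have heq : ∑ t, ∑ s, p t s * v t s = ∑ t, ∑ s, ∑ a, c t s a * y t s a :=
    cs_equality T S A hT c p P y hy v hv hcsT hcs
  refine ⟨heq, ?_, ?_⟩
  · intro y' hy'
    rw [← heq]
    exact weak_duality T S A hT c p P y' hy' v hv
  · intro v' hv'
    rw [heq]
    exact weak_duality T S A hT c p P y hy v' hv'
end

section
/- Wardrop equilibrium characterization (KKT sufficiency for Theorem 2): suppose y is primal-feasible, v : Fin T × Fin S → ℝ, and u_{tsa} = φ_{tsa}(y_{tsa}) with each φ_{tsa} continuous and increasing. If v_{Ts} = min_a u_{Tsa}, v_{ts} = min_a (u_{tsa} + ∑_{s'} P_{sas'} v_{t+1,s'}) for t < T, and y_{tsa} > 0 implies a attains the minimum in the corresponding expression, then y minimizes ∑_{t,s,a} ∫_0^{y_{tsa}} φ_{tsa}(α)dα over the primal-feasible set. -/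
open Finset

/-! The objective `F y = ∑ ∫₀^{y_{tsa}} φ_{tsa}` is convex with gradient `u = φ ∘ y`, so
monotonicity of each `φ_{tsa}` gives `F y' - F y ≥ ⟪u, y' - y⟫`, and it remains to show
`⟪u, y⟫ ≤ ⟪u, y'⟫`. This is LP duality for the flow problem with costs `u`: for any primal-feasible
`z`, summing the flow equations against `v` telescopes in time to `⟪v - Pv, z⟫ = ⟪p, v⟫`. The
Bellman inequalities say `v - Pv ≤ u`, so `⟪p, v⟫ ≤ ⟪u, y'⟫`, and complementary slackness turns
this into an equality for `y`. -/

theorem Monotone.mul_sub_le_intervalIntegral_sub {f : ℝ → ℝ} (hf : Monotone f) (a b c : ℝ) :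
    f a * (b - a) ≤ (∫ x in c..b, f x) - ∫ x in c..a, f x := by
  have hint : ∀ a b : ℝ, IntervalIntegrable f MeasureTheory.volume a b :=
    fun _ _ => hf.intervalIntegrable
  rw [intervalIntegral.integral_interval_sub_left (hint c b) (hint c a)]
  rcases le_total a b with hab | hba
  · simpa [mul_comm] using intervalIntegral.integral_mono_on hab intervalIntegrable_const
      (hint a b) fun x hx => hf hx.1
  · have h := intervalIntegral.integral_mono_on hba (hint b a)
      intervalIntegrable_const fun x hx => hf hx.2
    rw [intervalIntegral.integral_symm]
    simp only [intervalIntegral.integral_const, smul_eq_mul] at h ⊢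
    linarith

theorem Fin.forall_of_last_of_lt {T : ℕ} (hT : 0 < T) {Q : Fin T → Prop}
    (last : Q ⟨T - 1, Nat.sub_lt hT _root_.one_pos⟩)
    (lt : ∀ (t : ℕ) (ht : t + 1 < T), Q ⟨t, lt_trans (Nat.lt_succ_self t) ht⟩) (t : Fin T) :
    Q t := by
  obtain ⟨t, ht⟩ := t
  by_cases h : t + 1 < T
  · exact lt t h
  · obtain rfl : t = T - 1 := by omega
    exact last

theorem sum_transition_mul_eq_sum_mul_flow {σ α : Type*} [Fintype σ] [Fintype α]
    (P : σ → α → σ → ℝ) (z : σ → α → ℝ) (w : σ → ℝ) :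
    ∑ s, ∑ a, (∑ s', P s a s' * w s') * z s a = ∑ s', (∑ s, ∑ a, P s a s' * z s a) * w s' := by
  symm
  simp only [sum_mul]
  rw [sum_comm]
  refine Finset.sum_congr rfl fun s _ => ?_
  rw [sum_comm]
  exact Finset.sum_congr rfl fun a _ => Finset.sum_congr rfl fun s' _ => by ring

section MarkovDecisionProcess

variable {T S A : ℕ} {hT : 0 < T} {p : Fin T → Fin S → ℝ} {P : Fin S → Fin A → Fin S → ℝ}
  {c z : Fin T → Fin S → Fin A → ℝ} {v : Fin T → Fin S → ℝ}

/-- Zero after the horizon, so that the terminal Bellman condition is the general one. -/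
def expectedNextValue (P : Fin S → Fin A → Fin S → ℝ) (v : Fin T → Fin S → ℝ)
    (t : Fin T) (s : Fin S) (a : Fin A) : ℝ :=
  if h : t.val + 1 < T then ∑ s', P s a s' * v ⟨t + 1, h⟩ s' else 0

theorem expectedNextValue_of_lt (t : Fin T) (h : t.val + 1 < T) (s : Fin S) (a : Fin A) :
    expectedNextValue P v t s a = ∑ s', P s a s' * v ⟨t + 1, h⟩ s' :=
  dif_pos h

theorem expectedNextValue_of_not_lt (t : Fin T) (h : ¬t.val + 1 < T) (s : Fin S) (a : Fin A) :
    expectedNextValue P v t s a = 0 :=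
  dif_neg h

theorem expectedNextValue_castSucc {n : ℕ} {v : Fin (n + 1) → Fin S → ℝ} (i : Fin n) (s : Fin S)
    (a : Fin A) : expectedNextValue P v i.castSucc s a = ∑ s', P s a s' * v i.succ s' :=
  expectedNextValue_of_lt _ i.succ.isLt s a

theorem expectedNextValue_last {n : ℕ} {v : Fin (n + 1) → Fin S → ℝ} (s : Fin S) (a : Fin A) :
    expectedNextValue P v (Fin.last n) s a = 0 :=
  expectedNextValue_of_not_lt _ (by simp) s a

theorem DualFeasible.sub_expectedNextValue_le (hv : DualFeasible T S A hT c P v) :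
    ∀ t s a, v t s - expectedNextValue P v t s a ≤ c t s a :=
  Fin.forall_of_last_of_lt hT
    (fun s a => by rw [expectedNextValue_of_not_lt _ (by simp; omega), sub_zero]; exact hv.1 s a)
    (fun t ht s a => by rw [expectedNextValue_of_lt _ ht]; linarith [hv.2 t ht s a])

theorem PrimalFeasible.sum_sub_expectedNextValue_mul (hz : PrimalFeasible T S A hT p P z)
    (v : Fin T → Fin S → ℝ) :
    ∑ t, ∑ s, ∑ a, (v t s - expectedNextValue P v t s a) * z t s a =
      ∑ t, ∑ s, p t s * v t s := by
  obtain ⟨n, rfl⟩ : ∃ n, T = n + 1 := ⟨T - 1, by omega⟩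
  obtain ⟨-, hz0, hflow⟩ := hz
  have hzero : ∀ s, ∑ a, z 0 s a = p 0 s := hz0
  have hsucc : ∀ (i : Fin n) s,
      ∑ a, z i.succ s a = p i.succ s + ∑ s', ∑ a, P s' a s * z i.castSucc s' a :=
    fun i => hflow i i.succ.isLt
  have hnext : ∑ t, ∑ s, ∑ a, expectedNextValue P v t s a * z t s a =
      ∑ i : Fin n, ∑ s, v i.succ s * (∑ a, z i.succ s a - p i.succ s) := by
    rw [Fin.sum_univ_castSucc]
    simp only [expectedNextValue_last, zero_mul, sum_const_zero, add_zero,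
      expectedNextValue_castSucc, sum_transition_mul_eq_sum_mul_flow, hsucc]
    exact Finset.sum_congr rfl fun i _ => Finset.sum_congr rfl fun s _ => by ring
  have hcur : ∑ t, ∑ s, ∑ a, v t s * z t s a =
      ∑ s, v 0 s * p 0 s + ∑ i : Fin n, ∑ s, v i.succ s * ∑ a, z i.succ s a := by
    simp only [← mul_sum, Fin.sum_univ_succ (n := n), hzero]
  simp only [sub_mul, sum_sub_distrib]
  rw [hcur, hnext, Fin.sum_univ_succ]
  simp only [mul_sub, sum_sub_distrib, mul_comm (p _ _)]
  ring

theorem PrimalFeasible.sum_mul_le_of_dualFeasible (hz : PrimalFeasible T S A hT p P z)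
    (hv : DualFeasible T S A hT c P v) :
    ∑ t, ∑ s, p t s * v t s ≤ ∑ t, ∑ s, ∑ a, c t s a * z t s a := by
  rw [← hz.sum_sub_expectedNextValue_mul v]
  gcongr with t _ s _ a _
  · exact hz.1 t s a
  · exact hv.sub_expectedNextValue_le t s a

theorem PrimalFeasible.sum_mul_eq_of_complementary (hz : PrimalFeasible T S A hT p P z)
    (hcs : ∀ t s a, 0 < z t s a → c t s a = v t s - expectedNextValue P v t s a) :
    ∑ t, ∑ s, ∑ a, c t s a * z t s a = ∑ t, ∑ s, p t s * v t s := by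
  rw [← hz.sum_sub_expectedNextValue_mul v]
  refine sum_congr rfl fun t _ => sum_congr rfl fun s _ => sum_congr rfl fun a _ => ?_
  rcases (hz.1 t s a).eq_or_lt with hzero | hpos
  · simp [← hzero]
  · rw [hcs t s a hpos]

end MarkovDecisionProcess

theorem wardrop_kkt_sufficiency_general
    (T S A : ℕ) (hT : 0 < T)
    (p : Fin T → Fin S → ℝ)
    (P : Fin S → Fin A → Fin S → ℝ)
    (φ : Fin T → Fin S → Fin A → ℝ → ℝ)
    (hφm : ∀ t s a, Monotone (φ t s a))
    (y : Fin T → Fin S → Fin A → ℝ)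
    (hy : PrimalFeasible T S A hT p P y)
    (u : Fin T → Fin S → Fin A → ℝ)
    (hu : ∀ t s a, u t s a = φ t s a (y t s a))
    (v : Fin T → Fin S → ℝ)
    (hvT : ∀ s : Fin S,
      IsLeast (Set.range fun a => u ⟨T - 1, Nat.sub_lt hT one_pos⟩ s a)
        (v ⟨T - 1, Nat.sub_lt hT one_pos⟩ s))
    (hvB : ∀ (t : ℕ) (ht : t + 1 < T) (s : Fin S),
      IsLeast
        (Set.range fun a =>
          u ⟨t, lt_trans (Nat.lt_succ_self t) ht⟩ s a
            + ∑ s', P s a s' * v ⟨t + 1, ht⟩ s')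
        (v ⟨t, lt_trans (Nat.lt_succ_self t) ht⟩ s))
    (hcsT : ∀ (s : Fin S) (a : Fin A),
      0 < y ⟨T - 1, Nat.sub_lt hT one_pos⟩ s a →
        v ⟨T - 1, Nat.sub_lt hT one_pos⟩ s = u ⟨T - 1, Nat.sub_lt hT one_pos⟩ s a)
    (hcs : ∀ (t : ℕ) (ht : t + 1 < T) (s : Fin S) (a : Fin A),
      0 < y ⟨t, lt_trans (Nat.lt_succ_self t) ht⟩ s a →
        v ⟨t, lt_trans (Nat.lt_succ_self t) ht⟩ s
          = u ⟨t, lt_trans (Nat.lt_succ_self t) ht⟩ s a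
            + ∑ s', P s a s' * v ⟨t + 1, ht⟩ s') :
    ∀ y', PrimalFeasible T S A hT p P y' →
      (∑ t, ∑ s, ∑ a, ∫ α in (0:ℝ)..(y t s a), φ t s a α)
        ≤ ∑ t, ∑ s, ∑ a, ∫ α in (0:ℝ)..(y' t s a), φ t s a α := by
  intro y' hy'
  have hdual : DualFeasible T S A hT u P v :=
    ⟨fun s a => (hvT s).2 ⟨a, rfl⟩, fun t ht s a => (hvB t ht s).2 ⟨a, rfl⟩⟩
  have hslack : ∀ t s a, 0 < y t s a → u t s a = v t s - expectedNextValue P v t s a :=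
    Fin.forall_of_last_of_lt hT
      (fun s a h => by rw [expectedNextValue_of_not_lt _ (by simp; omega), hcsT s a h, sub_zero])
      (fun t ht s a h => by rw [expectedNextValue_of_lt _ ht, hcs t ht s a h]; ring)
  have hvariational : ∑ t, ∑ s, ∑ a, u t s a * y t s a ≤ ∑ t, ∑ s, ∑ a, u t s a * y' t s a :=
    (hy.sum_mul_eq_of_complementary hslack).trans_le (hy'.sum_mul_le_of_dualFeasible hdual)
  have hgradient := sum_le_sum fun t (_ : t ∈ univ) => sum_le_sum fun s (_ : s ∈ univ) =>
    sum_le_sum fun a (_ : a ∈ univ) => hu t s a ▸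
      (hφm t s a).mul_sub_le_intervalIntegral_sub (y t s a) (y' t s a) 0
  simp only [mul_sub, sum_sub_distrib] at hgradient
  linarith

theorem wardrop_kkt_sufficiency
    (T S A : ℕ) (hT : 0 < T) (hS : 0 < S) (hA : 0 < A)
    (p : Fin T → Fin S → ℝ) (hp : ∀ t s, 0 ≤ p t s)
    (P : Fin S → Fin A → Fin S → ℝ)
    (hP : ∀ s a s', 0 ≤ P s a s')
    (hP1 : ∀ s a, ∑ s', P s a s' = 1)
    (φ : Fin T → Fin S → Fin A → ℝ → ℝ)
    (hφc : ∀ t s a, Continuous (φ t s a))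
    (hφm : ∀ t s a, Monotone (φ t s a))
    (y : Fin T → Fin S → Fin A → ℝ)
    (hy : PrimalFeasible T S A hT p P y)
    (u : Fin T → Fin S → Fin A → ℝ)
    (hu : ∀ t s a, u t s a = φ t s a (y t s a))
    (v : Fin T → Fin S → ℝ)
    (hvT : ∀ s : Fin S,
      IsLeast (Set.range fun a => u ⟨T - 1, Nat.sub_lt hT one_pos⟩ s a)
        (v ⟨T - 1, Nat.sub_lt hT one_pos⟩ s))
    (hvB : ∀ (t : ℕ) (ht : t + 1 < T) (s : Fin S),
      IsLeast
        (Set.range fun a =>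
          u ⟨t, lt_trans (Nat.lt_succ_self t) ht⟩ s a
            + ∑ s', P s a s' * v ⟨t + 1, ht⟩ s')
        (v ⟨t, lt_trans (Nat.lt_succ_self t) ht⟩ s))
    (hcsT : ∀ (s : Fin S) (a : Fin A),
      0 < y ⟨T - 1, Nat.sub_lt hT one_pos⟩ s a →
        v ⟨T - 1, Nat.sub_lt hT one_pos⟩ s = u ⟨T - 1, Nat.sub_lt hT one_pos⟩ s a)
    (hcs : ∀ (t : ℕ) (ht : t + 1 < T) (s : Fin S) (a : Fin A),
      0 < y ⟨t, lt_trans (Nat.lt_succ_self t) ht⟩ s a →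
        v ⟨t, lt_trans (Nat.lt_succ_self t) ht⟩ s
          = u ⟨t, lt_trans (Nat.lt_succ_self t) ht⟩ s a
            + ∑ s', P s a s' * v ⟨t + 1, ht⟩ s') :
    ∀ y', PrimalFeasible T S A hT p P y' →
      (∑ t, ∑ s, ∑ a, ∫ α in (0:ℝ)..(y t s a), φ t s a α)
        ≤ ∑ t, ∑ s, ∑ a, ∫ α in (0:ℝ)..(y' t s a), φ t s a α :=
  wardrop_kkt_sufficiency_general T S A hT p P φ hφm y hy u hu v hvT hvB hcsT hcs
end

section
/- Weak duality for the supply-demand pair: for all y ≥ 0 with y in the domain where φ, ψ are defined, and all v with φ(0) ≤ v ≤ ψ(0), we have ∫_0^y ψ(α)dα − ∫_0^y φ(α)dα ≤ ∫_{φ(0)}^v φ^{-1}(β)dβ + ∫_v^{ψ(0)} ψ^{-1}(β)dβ. -/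
/-!
Both sides come from Young's inequality `y v - ∫₀^y φ ≤ ∫_{φ 0}^v φ⁻¹` for an increasing `φ`,
applied once to `φ` and once to the increasing function `-ψ`; adding the two, the terms `y v`
cancel. Young's inequality follows from the equality case `∫₀^x φ + ∫_{φ 0}^{φ x} φ⁻¹ = x φ x`
by comparing `φ⁻¹` with the constant `y` between `φ y` and `v`. For the equality case, no
regularity of `φ⁻¹` is needed: squeezing both integrals between rectangles shows that the
defect of the identity changes by at most `|s - t| |φ s - φ t| = o(s - t)` between `t` and `s`,
so it has derivative zero and vanishes since it vanishes at `0`.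
-/

open Set Topology Asymptotics MeasureTheory intervalIntegral

theorem hasDerivWithinAt_zero_of_abs_sub_le_mul {K g : ℝ → ℝ} {s : Set ℝ} {t : ℝ}
    (hg : ContinuousWithinAt g s t) (h : ∀ u ∈ s, |K u - K t| ≤ |u - t| * |g u - g t|) :
    HasDerivWithinAt K 0 s t := by
  rw [hasDerivWithinAt_iff_isLittleO]
  have hbig : (fun u => K u - K t) =O[𝓝[s] t] fun u => (u - t) * (g u - g t) :=
    IsBigO.of_bound 1 (eventually_nhdsWithin_of_forall fun u hu => by
      simpa [abs_mul] using h u hu)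
  have hsmall : (fun u => (u - t) * (g u - g t)) =o[𝓝[s] t] fun u => (u - t) * 1 :=
    (isBigO_refl _ _).mul_isLittleO ((isLittleO_one_iff ℝ).2 (tendsto_sub_nhds_zero_iff.2 hg))
  simpa using hbig.trans_isLittleO hsmall

theorem sub_mul_le_integral_of_le {f : ℝ → ℝ} {a b c : ℝ} (hab : a ≤ b)
    (hf : IntervalIntegrable f volume a b) (h : ∀ x ∈ Icc a b, c ≤ f x) :
    (b - a) * c ≤ ∫ x in a..b, f x := by
  simpa using integral_mono_on hab intervalIntegrable_const hf h

theorem integral_le_sub_mul_of_le {f : ℝ → ℝ} {a b c : ℝ} (hab : a ≤ b)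
    (hf : IntervalIntegrable f volume a b) (h : ∀ x ∈ Icc a b, f x ≤ c) :
    ∫ x in a..b, f x ≤ (b - a) * c := by
  simpa using integral_mono_on hab hf intervalIntegrable_const h

section RightInverse

variable {φ φinv : ℝ → ℝ}

theorem le_rightInv_iff (hφm : StrictMono φ) (hφinv : ∀ b ∈ Ici (φ 0), φ (φinv b) = b)
    {b : ℝ} (hb : φ 0 ≤ b) (c : ℝ) : c ≤ φinv b ↔ φ c ≤ b := by
  rw [← hφm.le_iff_le, hφinv b hb]

theorem rightInv_le_iff (hφm : StrictMono φ) (hφinv : ∀ b ∈ Ici (φ 0), φ (φinv b) = b)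
    {b : ℝ} (hb : φ 0 ≤ b) (c : ℝ) : φinv b ≤ c ↔ b ≤ φ c := by
  rw [← hφm.le_iff_le, hφinv b hb]

theorem monotoneOn_rightInv (hφm : StrictMono φ) (hφinv : ∀ b ∈ Ici (φ 0), φ (φinv b) = b) :
    MonotoneOn φinv (Ici (φ 0)) := fun _ ha b hb hab =>
  (rightInv_le_iff hφm hφinv ha _).2 (hab.trans (hφinv b hb).ge)

theorem intervalIntegrable_rightInv (hφm : StrictMono φ)
    (hφinv : ∀ b ∈ Ici (φ 0), φ (φinv b) = b) {a b : ℝ} (ha : φ 0 ≤ a) (hb : φ 0 ≤ b) :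
    IntervalIntegrable φinv volume a b :=
  ((monotoneOn_rightInv hφm hφinv).mono fun _ hx => (le_min ha hb).trans hx.1).intervalIntegrable

end RightInverse

noncomputable def youngDefect (φ φinv : ℝ → ℝ) (t : ℝ) : ℝ :=
  (∫ α in (0:ℝ)..t, φ α) + (∫ β in (φ 0)..(φ t), φinv β) - t * φ t

section Young

variable {φ φinv : ℝ → ℝ}

theorem abs_youngDefect_sub_le (hφc : Continuous φ) (hφm : StrictMono φ)
    (hφinv : ∀ b ∈ Ici (φ 0), φ (φinv b) = b) {s t : ℝ} (hs : 0 ≤ s) (ht : 0 ≤ t) :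
    |youngDefect φ φinv s - youngDefect φ φinv t| ≤ |s - t| * |φ s - φ t| := by
  wlog hts : t ≤ s generalizing s t
  · rw [abs_sub_comm, abs_sub_comm s, abs_sub_comm (φ s)]
    exact this ht hs (le_of_not_ge hts)
  have hφts : φ t ≤ φ s := hφm.monotone hts
  have hφ0t : φ 0 ≤ φ t := hφm.monotone ht
  have hφ_lower : (s - t) * φ t ≤ ∫ α in t..s, φ α :=
    sub_mul_le_integral_of_le hts (hφc.intervalIntegrable _ _) fun _ hα => hφm.monotone hα.1
  have hφ_upper : ∫ α in t..s, φ α ≤ (s - t) * φ s :=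
    integral_le_sub_mul_of_le hts (hφc.intervalIntegrable _ _) fun _ hα => hφm.monotone hα.2
  have hinv_int : IntervalIntegrable φinv volume (φ t) (φ s) :=
    intervalIntegrable_rightInv hφm hφinv hφ0t (hφ0t.trans hφts)
  have hinv_lower : (φ s - φ t) * t ≤ ∫ β in (φ t)..(φ s), φinv β :=
    sub_mul_le_integral_of_le hφts hinv_int fun β hβ =>
      (le_rightInv_iff hφm hφinv (hφ0t.trans hβ.1) t).2 hβ.1
  have hinv_upper : ∫ β in (φ t)..(φ s), φinv β ≤ (φ s - φ t) * s :=
    integral_le_sub_mul_of_le hφts hinv_int fun β hβ =>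
      (rightInv_le_iff hφm hφinv (hφ0t.trans hβ.1) s).2 hβ.2
  have hφ_split := integral_interval_sub_left (hφc.intervalIntegrable (μ := volume) 0 s)
    (hφc.intervalIntegrable 0 t)
  have hinv_split := integral_interval_sub_left
    (intervalIntegrable_rightInv hφm hφinv le_rfl (hφ0t.trans hφts))
    (intervalIntegrable_rightInv hφm hφinv le_rfl hφ0t)
  rw [abs_of_nonneg (sub_nonneg.2 hts), abs_of_nonneg (sub_nonneg.2 hφts), abs_le]
  unfold youngDefect
  constructor <;> linarith

theorem youngDefect_eq_zero (hφc : Continuous φ) (hφm : StrictMono φ)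
    (hφinv : ∀ b ∈ Ici (φ 0), φ (φinv b) = b) {x : ℝ} (hx : 0 ≤ x) :
    youngDefect φ φinv x = 0 := by
  have hderiv : ∀ t ∈ Ici (0:ℝ), HasDerivWithinAt (youngDefect φ φinv) 0 (Ici 0) t :=
    fun _ ht => hasDerivWithinAt_zero_of_abs_sub_le_mul hφc.continuousWithinAt
      fun _ hu => abs_youngDefect_sub_le hφc hφm hφinv hu ht
  have hconst := constant_of_has_deriv_right_zero
    (fun t ht => (hderiv t ht.1).continuousWithinAt.mono Icc_subset_Ici_self)
    (fun t ht => (hderiv t ht.1).mono (Ici_subset_Ici.2 ht.1)) x ⟨hx, le_rfl⟩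
  rw [hconst]
  simp [youngDefect]

theorem mul_sub_le_integral_rightInv (hφm : StrictMono φ)
    (hφinv : ∀ b ∈ Ici (φ 0), φ (φinv b) = b) {c v : ℝ} (hc : 0 ≤ c) (hv : φ 0 ≤ v) :
    c * (v - φ c) ≤ ∫ β in (φ c)..v, φinv β := by
  have hφ0c : φ 0 ≤ φ c := hφm.monotone hc
  have hint := intervalIntegrable_rightInv hφm hφinv hφ0c hv
  rcases le_total (φ c) v with hcv | hvc
  · have := sub_mul_le_integral_of_le hcv hint fun β hβ =>
      (le_rightInv_iff hφm hφinv (hφ0c.trans hβ.1) c).2 hβ.1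
    linarith
  · have := integral_le_sub_mul_of_le hvc hint.symm fun β hβ =>
      (rightInv_le_iff hφm hφinv (hv.trans hβ.1) c).2 hβ.2
    rw [integral_symm]
    linarith

theorem young_integral (hφc : Continuous φ) (hφm : StrictMono φ)
    (hφinv : ∀ b ∈ Ici (φ 0), φ (φinv b) = b) {y v : ℝ} (hy : 0 ≤ y) (hv : φ 0 ≤ v) :
    y * v - ∫ α in (0:ℝ)..y, φ α ≤ ∫ β in (φ 0)..v, φinv β := by
  have hφ0y : φ 0 ≤ φ y := hφm.monotone hy
  have hidentity := youngDefect_eq_zero hφc hφm hφinv hy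
  have htail := mul_sub_le_integral_rightInv hφm hφinv hy hv
  rw [← integral_add_adjacent_intervals (intervalIntegrable_rightInv hφm hφinv le_rfl hφ0y)
    (intervalIntegrable_rightInv hφm hφinv hφ0y hv)]
  unfold youngDefect at hidentity
  linarith

theorem young_integral_of_strictAnti (hφc : Continuous φ) (hφm : StrictAnti φ)
    (hφinv : ∀ b ∈ Iic (φ 0), φ (φinv b) = b) {y v : ℝ} (hy : 0 ≤ y) (hv : v ≤ φ 0) :
    (∫ α in (0:ℝ)..y, φ α) - y * v ≤ ∫ β in v..(φ 0), φinv β := by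
  have := young_integral (φ := fun t => -φ t) (φinv := fun b => φinv (-b)) hφc.neg
    (fun _ _ hab => neg_lt_neg (hφm hab))
    (fun b (hb : -φ 0 ≤ b) => by rw [hφinv (-b) (neg_le.1 hb), neg_neg]) hy (neg_le_neg hv)
  rw [intervalIntegral.integral_neg, integral_comp_neg (fun b => φinv b), neg_neg, neg_neg] at this
  linarith

end Young

theorem supply_demand_weak_duality_general
    (φ ψ : ℝ → ℝ)
    (hφc : Continuous φ) (hφm : StrictMono φ)
    (hψc : Continuous ψ) (hψm : StrictAnti ψ)
    (φinv ψinv : ℝ → ℝ)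
    (hφi' : ∀ b ∈ Set.Ici (φ 0), φ (φinv b) = b)
    (hψi' : ∀ b ∈ Set.Iic (ψ 0), ψ (ψinv b) = b) :
    ∀ y ≥ (0:ℝ), ∀ v, φ 0 ≤ v → v ≤ ψ 0 →
      (∫ α in (0:ℝ)..y, ψ α) - (∫ α in (0:ℝ)..y, φ α)
        ≤ (∫ β in (φ 0)..v, φinv β) + (∫ β in v..(ψ 0), ψinv β) := by
  intro y hy v hv₁ hv₂
  linarith [young_integral hφc hφm hφi' hy hv₁, young_integral_of_strictAnti hψc hψm hψi' hy hv₂]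

theorem supply_demand_weak_duality
    (φ ψ : ℝ → ℝ)
    (hφc : Continuous φ) (hφm : StrictMono φ)
    (hψc : Continuous ψ) (hψm : StrictAnti ψ)
    (h0 : φ 0 < ψ 0)
    (φinv ψinv : ℝ → ℝ)
    (hφi : ∀ x ∈ Set.Ici (0:ℝ), φinv (φ x) = x)
    (hφi' : ∀ b ∈ Set.Ici (φ 0), φ (φinv b) = b)
    (hψi : ∀ x ∈ Set.Ici (0:ℝ), ψinv (ψ x) = x)
    (hψi' : ∀ b ∈ Set.Iic (ψ 0), ψ (ψinv b) = b) :
    ∀ y ≥ (0:ℝ), ∀ v, φ 0 ≤ v → v ≤ ψ 0 →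
      (∫ α in (0:ℝ)..y, ψ α) - (∫ α in (0:ℝ)..y, φ α)
        ≤ (∫ β in (φ 0)..v, φinv β) + (∫ β in v..(ψ 0), ψinv β) :=
  supply_demand_weak_duality_general φ ψ hφc hφm hψc hψm φinv ψinv hφi' hψi'
end

section
/- Strong duality value identity for the dual decomposition: for fixed edge costs u : Fin T × Fin S × Fin A → ℝ, let g(u) denote the optimal value of the linear optimal distribution problem with cost u (which equals the optimal value of the linear optimal differential problem ∑_{t,s} p_{ts}v_{ts} with the Bellman potentials computed from u). Then g(u) = ∑_{t,s,a} y_{tsa} u_{tsa} where y is the Kolmogorov flow induced by any optimal policy for u, and g is concave as a function of u with y ∈ ∂g(u) (i.e., g(u') ≤ g(u) + ⟨y, u' − u⟩ for all u'). -/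
open Finset

/-- `g u` is the optimal value of the linear optimal distribution problem with cost `u`. -/
noncomputable def gval (T S A : ℕ) (hT : 0 < T)
    (p : Fin T → Fin S → ℝ) (P : Fin S → Fin A → Fin S → ℝ)
    (u : Fin T → Fin S → Fin A → ℝ) : ℝ :=
  sInf {r : ℝ | ∃ y', PrimalFeasible T S A hT p P y' ∧
    r = ∑ t, ∑ s, ∑ a, u t s a * y' t s a}

/-- Auxiliary: the "next-step expected value" term in the Bellman slack. -/
noncomputable def nextv {n S A : ℕ} (P : Fin S → Fin A → Fin S → ℝ)
    (v : Fin (n+1) → Fin S → ℝ) (t : Fin (n+1)) (s : Fin S) (a : Fin A) : ℝ :=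
  if ht : (t : ℕ) + 1 < n + 1 then ∑ s', P s a s' * v ⟨(t:ℕ)+1, ht⟩ s' else 0

lemma aux_identity (n S A : ℕ) (hT : 0 < n + 1)
    (p : Fin (n+1) → Fin S → ℝ) (P : Fin S → Fin A → Fin S → ℝ)
    (u : Fin (n+1) → Fin S → Fin A → ℝ) (v : Fin (n+1) → Fin S → ℝ)
    (y' : Fin (n+1) → Fin S → Fin A → ℝ)
    (h1 : ∀ s, ∑ a, y' ⟨0, hT⟩ s a = p ⟨0, hT⟩ s)
    (h2 : ∀ (t : ℕ) (ht : t + 1 < n+1) (s : Fin S),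
      ∑ a, y' ⟨t+1, ht⟩ s a = p ⟨t+1, ht⟩ s
        + ∑ s', ∑ a, P s' a s * y' ⟨t, lt_trans (Nat.lt_succ_self t) ht⟩ s' a) :
    ∑ t, ∑ s, ∑ a, u t s a * y' t s a
      = (∑ t, ∑ s, p t s * v t s)
        + ∑ t, ∑ s, ∑ a, y' t s a * (u t s a - v t s + nextv P v t s a) := by
  have key : ∑ t, ∑ s, v t s * ∑ a, y' t s a
      = (∑ t, ∑ s, p t s * v t s) + ∑ t, ∑ s, ∑ a, y' t s a * nextv P v t s a := by
    rw [Fin.sum_univ_succ (f := fun t => ∑ s, v t s * ∑ a, y' t s a),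
        Fin.sum_univ_succ (f := fun t => ∑ s, p t s * v t s),
        Fin.sum_univ_castSucc (f := fun t => ∑ s, ∑ a, y' t s a * nextv P v t s a)]
    have hlast : ∑ s, ∑ a, y' (Fin.last n) s a * nextv P v (Fin.last n) s a = 0 := by
      apply Finset.sum_eq_zero; intro s _
      apply Finset.sum_eq_zero; intro a _
      have : nextv P v (Fin.last n) s a = 0 := by
        rw [nextv, dif_neg]; simp [Fin.last]
      rw [this, mul_zero]
    rw [hlast, add_zero]
    have h0 : ∑ s, v 0 s * ∑ a, y' 0 s a = ∑ s, p 0 s * v 0 s := by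
      apply Finset.sum_congr rfl; intro s _
      rw [show (0 : Fin (n+1)) = ⟨0, hT⟩ from rfl, h1 s, mul_comm]
    rw [h0]
    have hstep : ∀ i : Fin n,
        ∑ s, v i.succ s * ∑ a, y' i.succ s a
          = ∑ s, p i.succ s * v i.succ s
            + ∑ s, ∑ a, y' i.castSucc s a * nextv P v i.castSucc s a := by
      intro i
      have hi : (i : ℕ) + 1 < n + 1 := Nat.succ_lt_succ i.isLt
      have e1 : ∀ s : Fin S, ∑ a, y' i.succ s a
          = p i.succ s + ∑ s', ∑ a, P s' a s * y' i.castSucc s' a := by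
        intro s
        exact h2 i hi s
      have hc : ((i.castSucc : Fin (n+1)) : ℕ) + 1 < n + 1 := by
        simp only [Fin.coe_castSucc]; exact hi
      have hfin : (⟨((i.castSucc : Fin (n+1)) : ℕ) + 1, hc⟩ : Fin (n+1)) = i.succ :=
        Fin.ext (by simp)
      have e2 : ∀ s a, nextv P v i.castSucc s a = ∑ s', P s a s' * v i.succ s' := by
        intro s a
        rw [nextv, dif_pos hc, hfin]
      calc ∑ s, v i.succ s * ∑ a, y' i.succ s a
          = ∑ s, (p i.succ s * v i.succ s
              + v i.succ s * ∑ s', ∑ a, P s' a s * y' i.castSucc s' a) := by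
            apply Finset.sum_congr rfl; intro s _; rw [e1 s]; ring
        _ = ∑ s, p i.succ s * v i.succ s
              + ∑ s, v i.succ s * ∑ s', ∑ a, P s' a s * y' i.castSucc s' a := by
            rw [Finset.sum_add_distrib]
        _ = ∑ s, p i.succ s * v i.succ s
              + ∑ s, ∑ a, y' i.castSucc s a * nextv P v i.castSucc s a := by
            congr 1
            calc ∑ s, v i.succ s * ∑ s', ∑ a, P s' a s * y' i.castSucc s' a
                = ∑ s, ∑ s', ∑ a, v i.succ s * (P s' a s * y' i.castSucc s' a) := by
                  simp only [Finset.mul_sum]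
              _ = ∑ s', ∑ s, ∑ a, v i.succ s * (P s' a s * y' i.castSucc s' a) :=
                  Finset.sum_comm
              _ = ∑ s', ∑ a, ∑ s, v i.succ s * (P s' a s * y' i.castSucc s' a) :=
                  Finset.sum_congr rfl fun _ _ => Finset.sum_comm
              _ = ∑ s', ∑ a, y' i.castSucc s' a * ∑ s, P s' a s * v i.succ s := by
                  apply Finset.sum_congr rfl; intro s' _
                  apply Finset.sum_congr rfl; intro a _
                  rw [Finset.mul_sum]
                  apply Finset.sum_congr rfl; intro s _; ring
              _ = ∑ s', ∑ a, y' i.castSucc s' a * nextv P v i.castSucc s' a := by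
                  apply Finset.sum_congr rfl; intro s' _
                  apply Finset.sum_congr rfl; intro a _
                  rw [e2 s' a]
    rw [Finset.sum_congr rfl (fun i _ => hstep i), Finset.sum_add_distrib]
    ring
  have expand : ∑ t, ∑ s, ∑ a, y' t s a * (u t s a - v t s + nextv P v t s a)
      = ∑ t, ∑ s, ∑ a, u t s a * y' t s a
        - ∑ t, ∑ s, v t s * ∑ a, y' t s a
        + ∑ t, ∑ s, ∑ a, y' t s a * nextv P v t s a := by
    rw [← Finset.sum_sub_distrib, ← Finset.sum_add_distrib]
    apply Finset.sum_congr rfl; intro t _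
    rw [← Finset.sum_sub_distrib, ← Finset.sum_add_distrib]
    apply Finset.sum_congr rfl; intro s _
    rw [Finset.mul_sum, ← Finset.sum_sub_distrib, ← Finset.sum_add_distrib]
    apply Finset.sum_congr rfl; intro a _
    ring
  rw [expand, key]; ring

lemma mass_le (n S A : ℕ) (hT : 0 < n + 1)
    (p : Fin (n+1) → Fin S → ℝ) (hp : ∀ t s, 0 ≤ p t s)
    (P : Fin S → Fin A → Fin S → ℝ) (hP1 : ∀ s a, ∑ s', P s a s' = 1)
    (y' : Fin (n+1) → Fin S → Fin A → ℝ)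
    (h1 : ∀ s, ∑ a, y' ⟨0, hT⟩ s a = p ⟨0, hT⟩ s)
    (h2 : ∀ (t : ℕ) (ht : t + 1 < n+1) (s : Fin S),
      ∑ a, y' ⟨t+1, ht⟩ s a = p ⟨t+1, ht⟩ s
        + ∑ s', ∑ a, P s' a s * y' ⟨t, lt_trans (Nat.lt_succ_self t) ht⟩ s' a) :
    ∀ (k : ℕ) (hk : k < n+1),
      ∑ s, ∑ a, y' ⟨k, hk⟩ s a ≤ ((k:ℝ)+1) * ∑ t, ∑ s, p t s := by
  have hrow : ∀ t : Fin (n+1), ∑ s, p t s ≤ ∑ t, ∑ s, p t s := by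
    intro t
    exact Finset.single_le_sum (f := fun t => ∑ s, p t s)
      (fun t _ => Finset.sum_nonneg fun s _ => hp t s) (Finset.mem_univ t)
  intro k
  induction k with
  | zero =>
    intro hk
    have e : ∑ s, ∑ a, y' ⟨0, hk⟩ s a = ∑ s, p (⟨0, hk⟩ : Fin (n+1)) s :=
      Finset.sum_congr rfl fun s _ => h1 s
    rw [e]
    simpa using hrow ⟨0, hk⟩
  | succ k ih =>
    intro hk
    have hk' : k < n+1 := by omega
    have e : ∑ s, ∑ a, y' ⟨k+1, hk⟩ s a
        = ∑ s, p ⟨k+1, hk⟩ s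
          + ∑ s, ∑ s', ∑ a, P s' a s * y' ⟨k, hk'⟩ s' a := by
      rw [← Finset.sum_add_distrib]
      exact Finset.sum_congr rfl fun s _ => h2 k hk s
    have e2 : ∑ s, ∑ s', ∑ a, P s' a s * y' ⟨k, hk'⟩ s' a
        = ∑ s', ∑ a, y' ⟨k, hk'⟩ s' a := by
      rw [Finset.sum_comm]
      apply Finset.sum_congr rfl; intro s' _
      calc ∑ s, ∑ a, P s' a s * y' ⟨k, hk'⟩ s' a
          = ∑ a, ∑ s, P s' a s * y' ⟨k, hk'⟩ s' a := Finset.sum_comm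
        _ = ∑ a, y' ⟨k, hk'⟩ s' a := by
            apply Finset.sum_congr rfl; intro a _
            rw [← Finset.sum_mul, hP1 s' a, one_mul]
    have hbdd := ih hk'
    have hrow' := hrow ⟨k+1, hk⟩
    rw [e, e2]
    push_cast
    linarith

lemma aux_bdd (n S A : ℕ) (hT : 0 < n + 1)
    (p : Fin (n+1) → Fin S → ℝ) (hp : ∀ t s, 0 ≤ p t s)
    (P : Fin S → Fin A → Fin S → ℝ) (hP1 : ∀ s a, ∑ s', P s a s' = 1)
    (c : Fin (n+1) → Fin S → Fin A → ℝ) :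
    BddBelow {r : ℝ | ∃ y', PrimalFeasible (n+1) S A hT p P y' ∧
      r = ∑ t, ∑ s, ∑ a, c t s a * y' t s a} := by
  set M : ℝ := ∑ t, ∑ s, p t s with hM
  have hM0 : 0 ≤ M := Finset.sum_nonneg fun t _ => Finset.sum_nonneg fun s _ => hp t s
  set B : ℝ := ((n:ℝ)+1) * M with hB
  have hB0 : 0 ≤ B := by positivity
  refine ⟨-((∑ t, ∑ s, ∑ a, |c t s a|) * B), ?_⟩
  rintro r ⟨y', ⟨hnn, h1, h2⟩, rfl⟩
  have hyB : ∀ (t : Fin (n+1)) (s : Fin S) (a : Fin A), y' t s a ≤ B := by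
    intro t s a
    have hmass := mass_le n S A hT p hp P hP1 y' h1 h2 t.val t.isLt
    have hstep1 : y' t s a ≤ ∑ a, y' t s a :=
      Finset.single_le_sum (fun a _ => hnn t s a) (Finset.mem_univ a)
    have hstep2 : ∑ a, y' t s a ≤ ∑ s, ∑ a, y' t s a :=
      Finset.single_le_sum (f := fun s => ∑ a, y' t s a)
        (fun s _ => Finset.sum_nonneg fun a _ => hnn t s a) (Finset.mem_univ s)
    have heq : (⟨t.val, t.isLt⟩ : Fin (n+1)) = t := Fin.eta t t.isLt
    rw [heq] at hmass
    have hle : ((t:ℝ)+1) * M ≤ ((n:ℝ)+1) * M := by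
      have : (t:ℝ) ≤ (n:ℝ) := by exact_mod_cast Nat.lt_succ_iff.mp t.isLt
      nlinarith
    calc y' t s a ≤ ∑ s, ∑ a, y' t s a := le_trans hstep1 hstep2
      _ ≤ ((t:ℝ)+1) * M := hmass
      _ ≤ B := hle
  have expand : -((∑ t, ∑ s, ∑ a, |c t s a|) * B)
      = ∑ t, ∑ s, ∑ a, -( |c t s a| * B ) := by
    simp only [Finset.sum_mul, ← Finset.sum_neg_distrib]
  rw [expand]
  apply Finset.sum_le_sum; intro t _
  apply Finset.sum_le_sum; intro s _
  apply Finset.sum_le_sum; intro a _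
  have h1' : -( |c t s a| ) * B ≤ -( |c t s a| ) * y' t s a := by
    apply mul_le_mul_of_nonpos_left (hyB t s a)
    simp [abs_nonneg]
  have h2' : -( |c t s a| ) * y' t s a ≤ c t s a * y' t s a :=
    mul_le_mul_of_nonneg_right (neg_abs_le _) (hnn t s a)
  calc -( |c t s a| * B ) = -( |c t s a| ) * B := by ring
    _ ≤ c t s a * y' t s a := le_trans h1' h2'
theorem dual_decomposition_strong_duality
    (T S A : ℕ) (hT : 0 < T) (hS : 0 < S) (hA : 0 < A)
    (p : Fin T → Fin S → ℝ) (hp : ∀ t s, 0 ≤ p t s)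
    (P : Fin S → Fin A → Fin S → ℝ)
    (hP : ∀ s a s', 0 ≤ P s a s')
    (hP1 : ∀ s a, ∑ s', P s a s' = 1)
    (u : Fin T → Fin S → Fin A → ℝ)
    (v : Fin T → Fin S → ℝ) (π : Fin T → Fin S → Fin A)
    -- π is an optimal policy for cost u, realizing the Bellman minima
    (hvT : ∀ (s : Fin S) (a : Fin A),
      v ⟨T - 1, Nat.sub_lt hT one_pos⟩ s ≤ u ⟨T - 1, Nat.sub_lt hT one_pos⟩ s a)
    (hπT : ∀ s : Fin S,
      v ⟨T - 1, Nat.sub_lt hT one_pos⟩ s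
        = u ⟨T - 1, Nat.sub_lt hT one_pos⟩ s (π ⟨T - 1, Nat.sub_lt hT one_pos⟩ s))
    (hvB : ∀ (t : ℕ) (ht : t + 1 < T) (s : Fin S) (a : Fin A),
      v ⟨t, lt_trans (Nat.lt_succ_self t) ht⟩ s
        ≤ u ⟨t, lt_trans (Nat.lt_succ_self t) ht⟩ s a
          + ∑ s', P s a s' * v ⟨t + 1, ht⟩ s')
    (hπB : ∀ (t : ℕ) (ht : t + 1 < T) (s : Fin S),
      v ⟨t, lt_trans (Nat.lt_succ_self t) ht⟩ s
        = u ⟨t, lt_trans (Nat.lt_succ_self t) ht⟩ s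
            (π ⟨t, lt_trans (Nat.lt_succ_self t) ht⟩ s)
          + ∑ s', P s (π ⟨t, lt_trans (Nat.lt_succ_self t) ht⟩ s) s'
              * v ⟨t + 1, ht⟩ s')
    -- y is the Kolmogorov flow induced by the policy π
    (m : Fin T → Fin S → ℝ) (y : Fin T → Fin S → Fin A → ℝ)
    (hy : ∀ t s a, y t s a = if a = π t s then m t s else 0)
    (hm1 : ∀ s, m ⟨0, hT⟩ s = p ⟨0, hT⟩ s)
    (hmK : ∀ (t : ℕ) (ht : t + 1 < T) (s : Fin S),
      m ⟨t + 1, ht⟩ s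
        = p ⟨t + 1, ht⟩ s
          + ∑ s', ∑ a, P s' a s * y ⟨t, lt_trans (Nat.lt_succ_self t) ht⟩ s' a) :
    (gval T S A hT p P u = ∑ t, ∑ s, ∑ a, y t s a * u t s a) ∧
    (∀ u', gval T S A hT p P u'
      ≤ gval T S A hT p P u + ∑ t, ∑ s, ∑ a, y t s a * (u' t s a - u t s a)) ∧
    (∀ u₁ u₂ : Fin T → Fin S → Fin A → ℝ, ∀ θ : ℝ, 0 ≤ θ → θ ≤ 1 →
      θ * gval T S A hT p P u₁ + (1 - θ) * gval T S A hT p P u₂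
        ≤ gval T S A hT p P (fun t s a => θ * u₁ t s a + (1 - θ) * u₂ t s a)) := by
  obtain ⟨n, rfl⟩ : ∃ n, T = n + 1 := ⟨T - 1, by omega⟩
  -- the flow y sums to m over actions
  have hsum : ∀ t s, ∑ a, y t s a = m t s := by
    intro t s
    simp [hy]
  -- m is nonnegative
  have hm_nonneg : ∀ (k : ℕ) (hk : k < n+1) (s : Fin S), 0 ≤ m ⟨k, hk⟩ s := by
    intro k
    induction k with
    | zero =>
      intro hk s
      rw [show (⟨0, hk⟩ : Fin (n+1)) = ⟨0, hT⟩ from rfl, hm1 s]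
      exact hp _ s
    | succ k ih =>
      intro hk s
      rw [hmK k hk s]
      apply add_nonneg (hp _ s)
      apply Finset.sum_nonneg; intro s' _
      apply Finset.sum_nonneg; intro a _
      apply mul_nonneg (hP s' a s)
      rw [hy]
      split
      · exact ih (by omega) s'
      · exact le_refl 0
  have hy_nonneg : ∀ t s a, 0 ≤ y t s a := by
    intro t s a
    rw [hy]
    split
    · have := hm_nonneg t.val t.isLt s
      simpa only [Fin.eta] using this
    · exact le_refl 0
  have hfeas_y : PrimalFeasible (n+1) S A hT p P y :=
    ⟨hy_nonneg, fun s => by rw [hsum]; exact hm1 s,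
      fun t ht s => by rw [hsum]; exact hmK t ht s⟩
  -- complementary slackness: slack of y vanishes
  have hslack0 : ∀ (t : Fin (n+1)) (s : Fin S) (a : Fin A),
      y t s a * (u t s a - v t s + nextv P v t s a) = 0 := by
    intro t s a
    rcases eq_or_ne a (π t s) with h | h
    · subst h
      suffices hs : u t s (π t s) - v t s + nextv P v t s (π t s) = 0 by
        rw [hs, mul_zero]
      by_cases ht : (t : ℕ) + 1 < n + 1
      · have hπ := hπB t.val ht s
        simp only [Fin.eta] at hπ
        rw [nextv, dif_pos ht]
        linarith
      · have heq : t = ⟨n + 1 - 1, Nat.sub_lt hT one_pos⟩ := by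
          apply Fin.ext
          show (t : ℕ) = n + 1 - 1
          have h := t.isLt
          omega
        rw [nextv, dif_neg ht, heq]
        have := hπT s
        linarith
    · rw [hy, if_neg h, zero_mul]
  -- dual feasibility: slack is nonnegative for any nonnegative flow
  have hslack_nonneg : ∀ (y' : Fin (n+1) → Fin S → Fin A → ℝ)
      (_ : ∀ t s a, 0 ≤ y' t s a) (t : Fin (n+1)) (s : Fin S) (a : Fin A),
      0 ≤ y' t s a * (u t s a - v t s + nextv P v t s a) := by
    intro y' hnn t s a
    apply mul_nonneg (hnn t s a)
    by_cases ht : (t : ℕ) + 1 < n + 1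
    · have hb := hvB t.val ht s a
      simp only [Fin.eta] at hb
      rw [nextv, dif_pos ht]
      linarith
    · have heq : t = ⟨n + 1 - 1, Nat.sub_lt hT one_pos⟩ := by
        apply Fin.ext
        have := t.isLt
        simp only []
        omega
      rw [nextv, dif_neg ht, heq]
      have := hvT s a
      linarith
  -- value of the flow y equals the dual value
  have hval : ∑ t, ∑ s, ∑ a, u t s a * y t s a = ∑ t, ∑ s, p t s * v t s := by
    rw [aux_identity n S A hT p P u v y hfeas_y.2.1 hfeas_y.2.2]
    have hz : ∑ t, ∑ s, ∑ a, y t s a * (u t s a - v t s + nextv P v t s a) = 0 :=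
      Finset.sum_eq_zero fun t _ => Finset.sum_eq_zero fun s _ =>
        Finset.sum_eq_zero fun a _ => hslack0 t s a
    rw [hz, add_zero]
  -- weak duality: the dual value lower-bounds all primal values
  have hlb : ∀ r ∈ {r : ℝ | ∃ y', PrimalFeasible (n+1) S A hT p P y' ∧
      r = ∑ t, ∑ s, ∑ a, u t s a * y' t s a}, ∑ t, ∑ s, p t s * v t s ≤ r := by
    rintro r ⟨y', ⟨hnn, h1, h2⟩, rfl⟩
    rw [aux_identity n S A hT p P u v y' h1 h2]
    have hz : 0 ≤ ∑ t, ∑ s, ∑ a, y' t s a * (u t s a - v t s + nextv P v t s a) :=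
      Finset.sum_nonneg fun t _ => Finset.sum_nonneg fun s _ =>
        Finset.sum_nonneg fun a _ => hslack_nonneg y' hnn t s a
    linarith
  have hmem : (∑ t, ∑ s, ∑ a, u t s a * y t s a) ∈ {r : ℝ | ∃ y',
      PrimalFeasible (n+1) S A hT p P y' ∧
      r = ∑ t, ∑ s, ∑ a, u t s a * y' t s a} := ⟨y, hfeas_y, rfl⟩
  have hg : gval (n+1) S A hT p P u = ∑ t, ∑ s, p t s * v t s := by
    simp only [gval]
    apply le_antisymm
    · calc sInf {r : ℝ | ∃ y', PrimalFeasible (n+1) S A hT p P y' ∧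
            r = ∑ t, ∑ s, ∑ a, u t s a * y' t s a}
          ≤ ∑ t, ∑ s, ∑ a, u t s a * y t s a :=
            csInf_le ⟨∑ t, ∑ s, p t s * v t s, fun r hr => hlb r hr⟩ hmem
        _ = ∑ t, ∑ s, p t s * v t s := hval
    · exact le_csInf ⟨_, hmem⟩ hlb
  have hcomm : ∑ t, ∑ s, ∑ a, y t s a * u t s a
      = ∑ t, ∑ s, ∑ a, u t s a * y t s a :=
    Finset.sum_congr rfl fun t _ => Finset.sum_congr rfl fun s _ =>
      Finset.sum_congr rfl fun a _ => mul_comm _ _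
  have hg1 : gval (n+1) S A hT p P u = ∑ t, ∑ s, ∑ a, y t s a * u t s a := by
    rw [hg, ← hval]
    exact hcomm.symm
  refine ⟨hg1, ?_, ?_⟩
  · -- supergradient inequality
    intro u'
    have hle : gval (n+1) S A hT p P u' ≤ ∑ t, ∑ s, ∑ a, u' t s a * y t s a := by
      simp only [gval]
      exact csInf_le (aux_bdd n S A hT p hp P hP1 u') ⟨y, hfeas_y, rfl⟩
    have hre : ∑ t, ∑ s, ∑ a, u' t s a * y t s a
        = gval (n+1) S A hT p P u
          + ∑ t, ∑ s, ∑ a, y t s a * (u' t s a - u t s a) := by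
      rw [hg1, ← Finset.sum_add_distrib]
      apply Finset.sum_congr rfl; intro t _
      rw [← Finset.sum_add_distrib]
      apply Finset.sum_congr rfl; intro s _
      rw [← Finset.sum_add_distrib]
      apply Finset.sum_congr rfl; intro a _
      ring
    linarith
  · -- concavity
    intro u₁ u₂ θ hθ0 hθ1
    have h1θ : 0 ≤ 1 - θ := by linarith
    have hne : (∑ t, ∑ s, ∑ a, (θ * u₁ t s a + (1 - θ) * u₂ t s a) * y t s a)
        ∈ {r : ℝ | ∃ y', PrimalFeasible (n+1) S A hT p P y' ∧
          r = ∑ t, ∑ s, ∑ a, (θ * u₁ t s a + (1 - θ) * u₂ t s a) * y' t s a} :=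
      ⟨y, hfeas_y, rfl⟩
    show _ ≤ gval (n+1) S A hT p P (fun t s a => θ * u₁ t s a + (1 - θ) * u₂ t s a)
    simp only [gval]
    apply le_csInf ⟨_, hne⟩
    rintro r ⟨y', hf, rfl⟩
    have g1 : gval (n+1) S A hT p P u₁ ≤ ∑ t, ∑ s, ∑ a, u₁ t s a * y' t s a := by
      simp only [gval]
      exact csInf_le (aux_bdd n S A hT p hp P hP1 u₁) ⟨y', hf, rfl⟩
    have g2 : gval (n+1) S A hT p P u₂ ≤ ∑ t, ∑ s, ∑ a, u₂ t s a * y' t s a := by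
      simp only [gval]
      exact csInf_le (aux_bdd n S A hT p hp P hP1 u₂) ⟨y', hf, rfl⟩
    have hr : ∑ t, ∑ s, ∑ a, (θ * u₁ t s a + (1 - θ) * u₂ t s a) * y' t s a
        = θ * ∑ t, ∑ s, ∑ a, u₁ t s a * y' t s a
          + (1 - θ) * ∑ t, ∑ s, ∑ a, u₂ t s a * y' t s a := by
      simp only [Finset.mul_sum]
      rw [← Finset.sum_add_distrib]
      apply Finset.sum_congr rfl; intro t _
      rw [← Finset.sum_add_distrib]
      apply Finset.sum_congr rfl; intro s _
      rw [← Finset.sum_add_distrib]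
      apply Finset.sum_congr rfl; intro a _
      ring
    rw [hr]
    have m1 := mul_le_mul_of_nonneg_left g1 hθ0
    have m2 := mul_le_mul_of_nonneg_left g2 h1θ
    simp only [gval] at m1 m2
    linarith
end
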